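/- arXiv:2205.14017 — 3 statements merged into one kernel-verified Lean document; each statement's English description precedes it below -/
import Mathlib

section
/- Let q and t be coprime positive integers with t odd, and let R = Z[X]/(X^N+1). Suppose c0 + c1·s = m + t·e (mod q) in R, where the coefficients of m + t·e (viewed as the symmetric representative) satisfy |coeff| < q/2. Then reducing c0 + c1·s symmetrically modulo q and then modulo t recovers m modulo t. -/
/-- Symmetric representative of `x` modulo `q`, in `[-q/2, q/2)` (for even `q`). -/
def symMod (x q : ℤ) : ℤ := (x + q / 2) % q - q / 2

lemma symMod_eq_of (q x y : ℤ) (hq : 0 < q) (hdvd : q ∣ x - y) (hb : 2 * |y| < q) :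
    symMod x q = y := by
  have h0 : 0 ≤ (x + q / 2) % q := Int.emod_nonneg _ (by omega)
  have h1 : (x + q / 2) % q < q := Int.emod_lt_of_pos _ hq
  have hdm := Int.mul_ediv_add_emod (x + q / 2) q
  have hd2 : q ∣ symMod x q - y := by
    have heq : symMod x q - y = (x - y) - q * ((x + q / 2) / q) := by
      unfold symMod; omega
    rw [heq]
    exact dvd_sub hdvd (Dvd.intro _ rfl)
  have hy : -q < 2 * y ∧ 2 * y < q := by
    rcases abs_cases y with ⟨h, _⟩ | ⟨h, _⟩ <;> omega
  have habs : |symMod x q - y| < q := by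
    rw [abs_lt]
    unfold symMod
    omega
  have := Int.eq_zero_of_abs_lt_dvd hd2 habs
  omega

lemma symMod_modEq (z t : ℤ) : symMod z t ≡ z [ZMOD t] := by
  unfold symMod
  have h1 : (z + t / 2) % t ≡ z + t / 2 [ZMOD t] :=
    Int.emod_emod_of_dvd _ dvd_rfl
  have h2 := h1.sub_right (t / 2)
  simpa using h2

/-- BGV decryption correctness: if `c0 + c1·s ≡ m + t·e (mod q)` coefficient-wise in
`R = ℤ[X]/(X^N+1)` (here `d` denotes the reduction of `c0 + c1·s` modulo `X^N+1`),
and all coefficients of `m + t·e` are `< q/2` in absolute value, then reducing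
symmetrically mod `q` and then mod `t` recovers `m` modulo `t`. -/
theorem stmt0 (q t : ℤ) (hq : 0 < q) (ht : 0 < t) (htodd : Odd t)
    (hcop : IsCoprime q t) (N : ℕ) (hN : 0 < N)
    (c0 c1 s m e d : Polynomial ℤ)
    (hd : (Polynomial.X ^ N + 1 : Polynomial ℤ) ∣ (c0 + c1 * s - d))
    (hdeg : d.natDegree < N)
    (hmod : ∀ i : ℕ, q ∣ (d - (m + Polynomial.C t * e)).coeff i)
    (hbound : ∀ i : ℕ, 2 * |(m + Polynomial.C t * e).coeff i| < q) :
    ∀ i : ℕ, symMod (symMod (d.coeff i) q) t ≡ m.coeff i [ZMOD t] := by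
  intro i
  have hmod' : q ∣ d.coeff i - (m + Polynomial.C t * e).coeff i := by
    simpa [Polynomial.coeff_sub] using hmod i
  have h1 := symMod_eq_of q (d.coeff i) ((m + Polynomial.C t * e).coeff i) hq hmod' (hbound i)
  rw [h1]
  have hz : (m + Polynomial.C t * e).coeff i = m.coeff i + t * e.coeff i := by
    simp [Polynomial.coeff_add, Polynomial.coeff_C_mul]
  rw [hz]
  refine (symMod_modEq _ t).trans ?_
  have : t ∣ m.coeff i - (m.coeff i + t * e.coeff i) := ⟨-e.coeff i, by ring⟩
  exact (Int.modEq_iff_dvd.mpr this)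
end

section
/- Let Q = ∏_{i=1}^k q_i with q_i pairwise coprime, and let p be coprime to Q. For an integer a with symmetric residues a_i = [a]_{q_i} ∈ [-q_i/2, q_i/2), the fast base extension FBE(a) = Σ_{i=1}^k [a_i · (Q/q_i)^{-1}]_{q_i} · (Q/q_i) satisfies FBE(a) ≡ a (mod Q), and FBE(a) = a* + Q·r where a* is the symmetric representative of a mod Q and r is an integer with |r| ≤ k/2. -/
/-!
The `i`-th summand of the fast base extension is `≡ a` modulo `qᵢ` and divisible by every other
`qⱼ`, so the Chinese remainder theorem gives the congruence modulo `Q`. Each summand is a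
symmetric residue modulo `qᵢ` times `Q/qᵢ`, hence lies in `[-Q/2, Q/2)`; so `-kQ ≤ 2·FBE(a) ≤ k(Q-1)`,
and subtracting `[a]_Q ∈ [-Q/2, Q/2)` leaves a multiple `Q·r` with `|r| ≤ k/2`.
-/

theorem symMod_modEq_s8 (x q : ℤ) : symMod x q ≡ x [ZMOD q] :=
  Int.modEq_iff_dvd.mpr ⟨(x + q / 2) / q, by
    have := Int.emod_add_mul_ediv (x + q / 2) q
    unfold symMod; linarith⟩

theorem symMod_bounds {q : ℤ} (hq : 0 < q) (x : ℤ) :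
    -q ≤ 2 * symMod x q ∧ 2 * symMod x q ≤ q - 1 := by
  have h0 := Int.emod_nonneg (x + q / 2) hq.ne'
  have h1 := Int.emod_lt_of_pos (x + q / 2) hq
  unfold symMod
  omega

theorem symMod_mul_bounds {q m : ℤ} (hq : 0 < q) (hm : 0 < m) (x : ℤ) :
    -(q * m) ≤ 2 * (symMod x q * m) ∧ 2 * (symMod x q * m) ≤ q * m - 1 := by
  obtain ⟨hlo, hhi⟩ := symMod_bounds hq x
  constructor <;> nlinarith

theorem exists_eq_symMod_add_mul {Q S a : ℤ} {k : ℕ} (hQ : 0 < Q) (hS : S ≡ a [ZMOD Q])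
    (hlo : -(k * Q) ≤ 2 * S) (hhi : 2 * S ≤ k * (Q - 1)) :
    ∃ r, S = symMod a Q + Q * r ∧ 2 * |r| ≤ k := by
  obtain ⟨r, hr⟩ : Q ∣ S - symMod a Q := ((symMod_modEq_s8 a Q).trans hS.symm).dvd
  refine ⟨r, by linarith, ?_⟩
  obtain ⟨hlo', hhi'⟩ := symMod_bounds hQ a
  have hr_le : 2 * r ≤ k := by
    by_contra! h
    -- `2rQ ≤ (k + 1)Q - k` forces `k = 0`, and then `r ≥ 1` contradicts `2rQ ≤ Q`.
    have hk : (k : ℤ) = 0 := by nlinarith [mul_le_mul_of_nonneg_right h hQ.le]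
    have hr1 : 1 ≤ r := by omega
    nlinarith
  have hr_ge : -(k : ℤ) ≤ 2 * r := by
    by_contra! h
    nlinarith [mul_le_mul_of_nonneg_right (show 2 * r ≤ -k - 1 by omega) hQ.le]
  cases abs_cases r <;> omega

section FastBaseExtension

variable {ι : Type*} [Fintype ι] {q : ι → ℤ}

theorem dvd_prod_div_of_ne {i j : ι} (hij : i ≠ j) :
    q j ∣ (∏ l, q l) / q i := by
  classical
  refine EuclideanDomain.dvd_div_of_mul_dvd ?_
  rw [← Finset.prod_pair hij]
  exact Finset.prod_dvd_prod_of_subset _ _ _ (Finset.subset_univ _)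

theorem sum_mul_prod_div_modEq (c : ι → ℤ) (j : ι) :
    ∑ i, c i * ((∏ l, q l) / q i) ≡ c j * ((∏ l, q l) / q j) [ZMOD q j] := by
  classical
  rw [← Finset.add_sum_erase _ _ (Finset.mem_univ j)]
  refine Int.modEq_iff_dvd.mpr ?_
  simp only [sub_add_cancel_left, dvd_neg]
  exact Finset.dvd_sum fun i hi =>
    (dvd_prod_div_of_ne (Finset.ne_of_mem_erase hi)).mul_left _

def fastBaseExt (q inv : ι → ℤ) (Q a : ℤ) : ℤ :=
  ∑ i, symMod (symMod a (q i) * inv i) (q i) * (Q / q i)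

theorem fastBaseExt_modEq (hcop : Pairwise fun i j => IsCoprime (q i) (q j))
    {inv : ι → ℤ} (hinv : ∀ i, (∏ l, q l) / q i * inv i ≡ 1 [ZMOD q i]) (a : ℤ) :
    fastBaseExt q inv (∏ l, q l) a ≡ a [ZMOD ∏ l, q l] := by
  refine Int.modEq_iff_dvd.mpr (Finset.prod_dvd_of_coprime (fun i _ j _ h => hcop h)
    fun j _ => Int.modEq_iff_dvd.mp ?_)
  calc fastBaseExt q inv (∏ l, q l) a
      ≡ symMod (symMod a (q j) * inv j) (q j) * ((∏ l, q l) / q j) [ZMOD q j] :=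
        sum_mul_prod_div_modEq _ j
    _ ≡ a * inv j * ((∏ l, q l) / q j) [ZMOD q j] :=
        ((symMod_modEq_s8 _ _).trans ((symMod_modEq_s8 a _).mul_right _)).mul_right _
    _ = a * ((∏ l, q l) / q j * inv j) := by ring
    _ ≡ a * 1 [ZMOD q j] := (hinv j).mul_left a
    _ = a := mul_one a

theorem fastBaseExt_bounds (hq : ∀ i, 0 < q i) (inv : ι → ℤ) (a : ℤ) :
    -(Fintype.card ι * ∏ l, q l) ≤ 2 * fastBaseExt q inv (∏ l, q l) a ∧
      2 * fastBaseExt q inv (∏ l, q l) a ≤ Fintype.card ι * ((∏ l, q l) - 1) := by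
  have hterm (i : ι) := symMod_mul_bounds (hq i)
    (Int.ediv_pos_of_pos_of_dvd (Finset.prod_pos fun l _ => hq l) (hq i).le
      (Finset.dvd_prod_of_mem q (Finset.mem_univ i))) (symMod a (q i) * inv i)
  simp only [Int.mul_ediv_cancel' (Finset.dvd_prod_of_mem q (Finset.mem_univ _))] at hterm
  unfold fastBaseExt
  rw [Finset.mul_sum]
  constructor
  · simpa using Finset.sum_le_sum fun i (_ : i ∈ Finset.univ) => (hterm i).1
  · simpa [mul_sub_one] using Finset.sum_le_sum fun i (_ : i ∈ Finset.univ) => (hterm i).2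

end FastBaseExtension

theorem stmt8_general (k : ℕ) (q : Fin k → ℤ) (hpos : ∀ i, 0 < q i)
    (hcop : ∀ i j, i ≠ j → IsCoprime (q i) (q j))
    (Q : ℤ) (hQ : Q = ∏ i, q i)
    (inv : Fin k → ℤ) (hinv : ∀ i, (Q / q i) * inv i ≡ 1 [ZMOD q i])
    (a : ℤ) :
    (∑ i, symMod (symMod a (q i) * inv i) (q i) * (Q / q i)) ≡ a [ZMOD Q] ∧
    ∃ r : ℤ, (∑ i, symMod (symMod a (q i) * inv i) (q i) * (Q / q i)) =
        symMod a Q + Q * r ∧ 2 * |r| ≤ (k : ℤ) := by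
  subst hQ
  have hcong := fastBaseExt_modEq (fun i j => hcop i j) hinv a
  obtain ⟨hlo, hhi⟩ := fastBaseExt_bounds hpos inv a
  rw [Fintype.card_fin] at hlo hhi
  exact ⟨hcong, exists_eq_symMod_add_mul (Finset.prod_pos fun i _ => hpos i) hcong hlo hhi⟩

/-- Fast base extension (Bajard et al.): with `Q = ∏ qᵢ` pairwise coprime, `p` coprime
to `Q`, and `aᵢ = [a]_{qᵢ}`, the quantity
`FBE(a) = Σᵢ [aᵢ·(Q/qᵢ)⁻¹]_{qᵢ}·(Q/qᵢ)` satisfies `FBE(a) ≡ a (mod Q)` and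
`FBE(a) = [a]_Q + Q·r` with `|r| ≤ k/2`. -/
theorem stmt8 (k : ℕ) (hk : 0 < k) (q : Fin k → ℤ) (hpos : ∀ i, 0 < q i)
    (hcop : ∀ i j, i ≠ j → IsCoprime (q i) (q j))
    (Q : ℤ) (hQ : Q = ∏ i, q i)
    (p : ℤ) (hp : IsCoprime p Q)
    (inv : Fin k → ℤ) (hinv : ∀ i, (Q / q i) * inv i ≡ 1 [ZMOD q i])
    (a : ℤ) :
    (∑ i, symMod (symMod a (q i) * inv i) (q i) * (Q / q i)) ≡ a [ZMOD Q] ∧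
    ∃ r : ℤ, (∑ i, symMod (symMod a (q i) * inv i) (q i) * (Q / q i)) =
        symMod a Q + Q * r ∧ 2 * |r| ≤ (k : ℤ) :=
  stmt8_general k q hpos hcop Q hQ inv hinv a
end

section
/- Let q be a prime with q ≡ 1 (mod 2N), N a power of 2, and ψ a primitive 2N-th root of unity in Z_q with ω = ψ². For polynomials a, b ∈ Z_q[X]/(X^N+1), define â[j] = NTT_ω(ψ^i·a_i)[j] and similarly b̂. Then the polynomial c with coefficients c_i = ψ^{-i}·INTT_ω(â ⊙ b̂)[i] equals a·b in Z_q[X]/(X^N+1), where ⊙ is pointwise multiplication. -/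
/-!
The twisted transform of a polynomial `p` of degree `< N` is its vector of values at the odd
powers `ψ^(2j+1) = ψ · ω^j`, which are exactly the roots of `X^N + 1`. Hence the pointwise
product of the transforms of `a` and `b` is the transform of `r = a * b mod (X^N + 1)`, and
since `r` has degree `< N`, inverting the transform (orthogonality of the powers of `ω`) and
untwisting recovers the coefficients of `r`.
-/

open Polynomial Finset

section NegacyclicTransform

variable {K : Type*} [Field K] {N : ℕ}

def ntt {R : Type*} [CommSemiring R] (ω : R) (N : ℕ) (x : ℕ → R) (j : ℕ) : R :=
  ∑ n ∈ range N, x n * ω ^ (n * j)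

def intt (ω : K) (N : ℕ) (y : ℕ → K) (i : ℕ) : K :=
  (N : K)⁻¹ * ∑ j ∈ range N, y j * ω⁻¹ ^ (i * j)

theorem geom_sum_eq_zero_of_pow_eq_one {R : Type*} [CommRing R] [IsDomain R] {r : R}
    (hr : r ^ N = 1) (hr1 : r ≠ 1) : ∑ j ∈ range N, r ^ j = 0 :=
  eq_zero_of_ne_zero_of_mul_left_eq_zero (sub_ne_zero_of_ne hr1.symm)
    (by rw [mul_neg_geom_sum, hr, sub_self])

theorem IsPrimitiveRoot.sum_pow_mul_inv_pow_eq_ite {ω : K} (hω : IsPrimitiveRoot ω N)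
    {n i : ℕ} (hn : n < N) (hi : i < N) :
    ∑ j ∈ range N, ω ^ (n * j) * ω⁻¹ ^ (i * j) = if n = i then (N : K) else 0 := by
  have hω0 : ω ≠ 0 := hω.ne_zero (by omega)
  simp_rw [pow_mul, ← mul_pow]
  split_ifs with hni
  · simp [hni, hω0]
  · refine geom_sum_eq_zero_of_pow_eq_one ?_ ?_
    · rw [mul_pow, ← pow_mul, ← pow_mul, mul_comm n, mul_comm i, pow_mul, pow_mul, inv_pow,
        hω.pow_eq_one]
      simp
    · rw [inv_pow, Ne, mul_inv_eq_one₀ (pow_ne_zero _ hω0)]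
      exact fun h => hni (hω.pow_inj hn hi h)

theorem intt_ntt {ω : K} (hω : IsPrimitiveRoot ω N) (x : ℕ → K) {i : ℕ} (hi : i < N) :
    intt ω N (ntt ω N x) i = x i := by
  have : NeZero N := ⟨by omega⟩
  have hN : (N : K) ≠ 0 := hω.neZero'.out
  calc intt ω N (ntt ω N x) i
      = (N : K)⁻¹ * ∑ n ∈ range N, x n * ∑ j ∈ range N, ω ^ (n * j) * ω⁻¹ ^ (i * j) := by
        simp only [intt, ntt, sum_mul, mul_sum, mul_assoc]
        rw [sum_comm]
    _ = x i := by
        rw [sum_congr rfl fun n hn => by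
          rw [hω.sum_pow_mul_inv_pow_eq_ite (mem_range.1 hn) hi, mul_ite, mul_zero]]
        rw [sum_ite_eq' _ _ (fun n => x n * N), if_pos (mem_range.2 hi)]
        field_simp

theorem ntt_twist_eq_eval {R : Type*} [CommSemiring R] (ω ψ : R) {p : R[X]}
    (hp : p.natDegree < N) (j : ℕ) :
    ntt ω N (fun n => ψ ^ n * p.coeff n) j = p.eval (ψ * ω ^ j) := by
  rw [eval_eq_sum_range' hp, ntt]
  refine sum_congr rfl fun n _ => ?_
  ring

theorem eval_modByMonic_X_pow_add_one {R : Type*} [CommRing R] (p : R[X]) {x : R}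
    (hx : x ^ N = -1) : (p %ₘ (X ^ N + 1)).eval x = p.eval x :=
  eval₂_modByMonic_eq_self_of_root (by simp [hx])

theorem natDegree_modByMonic_X_pow_add_one_lt {R : Type*} [CommRing R] [Nontrivial R]
    (p : R[X]) (hN : 0 < N) : (p %ₘ (X ^ N + 1)).natDegree < N := by
  have hdeg : (X ^ N + 1 : R[X]).natDegree = N := by
    simpa using natDegree_X_pow_add_C (n := N) (r := (1 : R))
  refine (natDegree_modByMonic_lt _ (leadingCoeff_X_pow_add_one hN) fun h => ?_).trans_eq hdeg
  rw [h, natDegree_one] at hdeg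
  omega

theorem sum_untwist_intt_ntt_mul_ntt_eq_modByMonic {ψ : K} (hψ : IsPrimitiveRoot ψ (2 * N))
    {a b : K[X]} (ha : a.natDegree < N) (hb : b.natDegree < N) :
    ∑ i ∈ range N, C (ψ⁻¹ ^ i * intt (ψ ^ 2) N
        (fun j => ntt (ψ ^ 2) N (fun n => ψ ^ n * a.coeff n) j *
          ntt (ψ ^ 2) N (fun n => ψ ^ n * b.coeff n) j) i) * X ^ i =
      a * b %ₘ (X ^ N + 1) := by
  have hN : 0 < N := by omega
  have hω : IsPrimitiveRoot (ψ ^ 2) N := hψ.pow (by omega) rfl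
  have hψN : ψ ^ N = -1 := (hψ.pow (by omega) (mul_comm 2 N)).eq_neg_one_of_two_right
  set r := a * b %ₘ (X ^ N + 1)
  have hr : r.natDegree < N := natDegree_modByMonic_X_pow_add_one_lt _ hN
  have hroot : ∀ j : ℕ, (ψ * (ψ ^ 2) ^ j) ^ N = -1 := fun j => by
    rw [← pow_mul, ← pow_succ', ← pow_mul, mul_comm, pow_mul, hψN]
    exact Odd.neg_one_pow ⟨j, by ring⟩
  have hproduct : ∀ j : ℕ, ntt (ψ ^ 2) N (fun n => ψ ^ n * a.coeff n) j *
      ntt (ψ ^ 2) N (fun n => ψ ^ n * b.coeff n) j =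
        ntt (ψ ^ 2) N (fun n => ψ ^ n * r.coeff n) j := fun j => by
    rw [ntt_twist_eq_eval _ _ ha, ntt_twist_eq_eval _ _ hb, ntt_twist_eq_eval _ _ hr,
      eval_modByMonic_X_pow_add_one _ (hroot j), eval_mul]
  simp_rw [hproduct]
  conv_rhs => rw [as_sum_range_C_mul_X_pow' r hr]
  refine sum_congr rfl fun i hi => ?_
  rw [intt_ntt hω _ (mem_range.1 hi), ← mul_assoc, ← mul_pow,
    inv_mul_cancel₀ (hψ.ne_zero (by omega)), one_pow, one_mul]

end NegacyclicTransform

theorem stmt11_general (q N : ℕ) [Fact q.Prime]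
    (ψ : ZMod q) (hψ : orderOf ψ = 2 * N)
    (a b : Polynomial (ZMod q)) (ha : a.natDegree < N) (hb : b.natDegree < N) :
    (Ideal.Quotient.mk (Ideal.span {(X : Polynomial (ZMod q)) ^ N + 1}))
      (∑ i ∈ range N, C ((ψ⁻¹) ^ i * ((N : ZMod q)⁻¹ *
        ∑ j ∈ range N,
          ((∑ n ∈ range N, ψ ^ n * a.coeff n * (ψ ^ 2) ^ (n * j)) *
           (∑ n ∈ range N, ψ ^ n * b.coeff n * (ψ ^ 2) ^ (n * j))) *
          ((ψ ^ 2)⁻¹) ^ (i * j))) * X ^ i) =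
    (Ideal.Quotient.mk (Ideal.span {(X : Polynomial (ZMod q)) ^ N + 1})) (a * b) := by
  have hprim : IsPrimitiveRoot ψ (2 * N) := hψ ▸ IsPrimitiveRoot.orderOf ψ
  calc _ = Ideal.Quotient.mk (Ideal.span {(X : Polynomial (ZMod q)) ^ N + 1})
        (a * b %ₘ (X ^ N + 1)) :=
      congrArg _ (sum_untwist_intt_ntt_mul_ntt_eq_modByMonic hprim ha hb)
    _ = _ := Ideal.Quotient.eq.2 <| Ideal.mem_span_singleton.2
        ⟨-(a * b /ₘ (X ^ N + 1)), by rw [modByMonic_eq_sub_mul_div]; ring⟩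

/-- Negacyclic convolution via twisted NTT: with `q ≡ 1 (mod 2N)` prime, `N` a power
of 2, `ψ` a primitive `2N`-th root of unity and `ω = ψ²`, pre-twisting by powers of
`ψ`, taking pointwise products of NTTs, inverse-transforming and post-twisting by
powers of `ψ⁻¹` computes the product `a·b` in `ℤ_q[X]/(X^N+1)`. -/
theorem stmt11 (q N : ℕ) [Fact q.Prime] (hN : ∃ a : ℕ, N = 2 ^ a) (hN0 : 0 < N)
    (hq : 2 * N ∣ q - 1) (ψ : ZMod q) (hψ : orderOf ψ = 2 * N)
    (a b : Polynomial (ZMod q)) (ha : a.natDegree < N) (hb : b.natDegree < N) :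
    (Ideal.Quotient.mk (Ideal.span {(X : Polynomial (ZMod q)) ^ N + 1}))
      (∑ i ∈ range N, C ((ψ⁻¹) ^ i * ((N : ZMod q)⁻¹ *
        ∑ j ∈ range N,
          ((∑ n ∈ range N, ψ ^ n * a.coeff n * (ψ ^ 2) ^ (n * j)) *
           (∑ n ∈ range N, ψ ^ n * b.coeff n * (ψ ^ 2) ^ (n * j))) *
          ((ψ ^ 2)⁻¹) ^ (i * j))) * X ^ i) =
    (Ideal.Quotient.mk (Ideal.span {(X : Polynomial (ZMod q)) ^ N + 1})) (a * b) :=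
  stmt11_general q N ψ hψ a b ha hb
end
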